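/- For s ∈ ℝ and a : ℤ² \ {0} → ℝ define N_s(a) = ( ∑_{k∈ℤ²\{0}} |k|^(2s) a_k² )^(1/2) ∈ [0, ∞], where |k| is the Euclidean norm. Let T > 0 and let χ_n, χ : [0,T] → (ℤ² \ {0} → ℝ) be such that t ↦ χ_n(t)_k and t ↦ χ(t)_k are measurable for every k and n. Assume: (i) for every δ ∈ (0,1], sup_{t∈[0,T]} N_{−δ}(χ(t)) < ∞ and ∫₀^T N_{1−δ}(χ(t))² dt < ∞, and likewise for each χ_n; (ii) for every δ ∈ (0,1], sup_{t∈[0,T]} N_{−δ}(χ_n(t) − χ(t)) → 0 and ∫₀^T N_{1−δ}(χ_n(t) − χ(t))² dt → 0 as n → ∞. Then for every β > 2 and γ ∈ [0,1) with βγ < 2, one has ∫₀^T N_γ(χ_n(t) − χ(t))^β dt → 0 as n → ∞. -/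

import Mathlib

/-! Choose `δ = 2/β - γ ∈ (0, 1]`. Log-convexity of the Sobolev scale (Hölder on the Fourier
side) interpolates `H^γ` between `H^{-δ}` and `H^{1-δ}` with weights `1 - 2/β` and `2/β`, so
pointwise in time `N_γ(χ_n - χ)^β ≤ N_{-δ}(χ_n - χ)^{β-2} · N_{1-δ}(χ_n - χ)²`. The first factor
tends to `0` uniformly in time and the second in `L¹(0,T)`. -/

open MeasureTheory Filter

/-- Euclidean norm of a lattice point `k ∈ ℤ²`. -/
noncomputable def latNorm (k : ℤ × ℤ) : ℝ := Real.sqrt ((k.1 : ℝ) ^ 2 + (k.2 : ℝ) ^ 2)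

/-- The `H^s(𝕋²)` Sobolev norm (valued in `[0, ∞]`) of the zero-mean function with Fourier
coefficients `a_k`: `N_s(a) = (∑_{k∈ℤ²₀} |k|^(2s) a_k²)^(1/2)`. -/
noncomputable def sobNorm (s : ℝ) (a : {k : ℤ × ℤ // k ≠ 0} → ℝ) : ENNReal :=
  (∑' k : {k : ℤ × ℤ // k ≠ 0}, ENNReal.ofReal (latNorm k.1 ^ (2 * s) * a k ^ 2)) ^ ((1:ℝ)/2)

lemma latNorm_pos {k : ℤ × ℤ} (hk : k ≠ 0) : 0 < latNorm k := by
  refine Real.sqrt_pos.2 ?_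
  have hk' : k.1 ≠ 0 ∨ k.2 ≠ 0 := by
    by_contra! h
    exact hk (Prod.ext h.1 h.2)
  rcases hk' with h | h
  · have : (k.1 : ℝ) ≠ 0 := Int.cast_ne_zero.2 h
    positivity
  · have : (k.2 : ℝ) ≠ 0 := Int.cast_ne_zero.2 h
    positivity

lemma ENNReal.ofReal_rpow_mul_eq_interp {x c θ a b : ℝ} (hx : 0 < x) (hc : 0 ≤ c)
    (hθ₀ : 0 < θ) :
    ENNReal.ofReal (x ^ (θ * a + (1 - θ) * b) * c) =
      ENNReal.ofReal (x ^ a * c) ^ θ * ENNReal.ofReal (x ^ b * c) ^ (1 - θ) := by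
  rcases hc.eq_or_lt with rfl | hc
  · simp [ENNReal.zero_rpow_of_pos hθ₀]
  rw [ENNReal.ofReal_rpow_of_pos (by positivity), ENNReal.ofReal_rpow_of_pos (by positivity),
    ← ENNReal.ofReal_mul (by positivity), Real.mul_rpow (by positivity) hc.le,
    Real.mul_rpow (by positivity) hc.le, ← Real.rpow_mul hx.le, ← Real.rpow_mul hx.le,
    mul_mul_mul_comm, ← Real.rpow_add hx, ← Real.rpow_add hc, add_sub_cancel, Real.rpow_one]
  ring_nf

lemma ENNReal.tsum_rpow_mul_rpow_le {ι : Type*} [Countable ι] (f g : ι → ENNReal) {θ : ℝ}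
    (hθ₀ : 0 ≤ θ) (hθ₁ : θ ≤ 1) :
    ∑' i, f i ^ θ * g i ^ (1 - θ) ≤ (∑' i, f i) ^ θ * (∑' i, g i) ^ (1 - θ) := by
  let : MeasurableSpace ι := ⊤
  simpa only [lintegral_count] using
    ENNReal.lintegral_mul_norm_pow_le (μ := Measure.count) (measurable_of_countable f).aemeasurable
      (measurable_of_countable g).aemeasurable hθ₀ (by linarith) (by ring)

lemma sobNorm_le_interp (a : {k : ℤ × ℤ // k ≠ 0} → ℝ) {s₀ s₁ θ : ℝ} (hθ₀ : 0 < θ)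
    (hθ₁ : θ < 1) :
    sobNorm (θ * s₀ + (1 - θ) * s₁) a ≤ sobNorm s₀ a ^ θ * sobNorm s₁ a ^ (1 - θ) := by
  have hsum := ENNReal.tsum_rpow_mul_rpow_le
    (fun k : {k : ℤ × ℤ // k ≠ 0} => ENNReal.ofReal (latNorm k.1 ^ (2 * s₀) * a k ^ 2))
    (fun k => ENNReal.ofReal (latNorm k.1 ^ (2 * s₁) * a k ^ 2)) hθ₀.le hθ₁.le
  have hterm : ∀ k : {k : ℤ × ℤ // k ≠ 0},
      ENNReal.ofReal (latNorm k.1 ^ (2 * (θ * s₀ + (1 - θ) * s₁)) * a k ^ 2) =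
        ENNReal.ofReal (latNorm k.1 ^ (2 * s₀) * a k ^ 2) ^ θ *
          ENNReal.ofReal (latNorm k.1 ^ (2 * s₁) * a k ^ 2) ^ (1 - θ) := fun k => by
    rw [← ENNReal.ofReal_rpow_mul_eq_interp (latNorm_pos k.2) (sq_nonneg _) hθ₀]
    ring_nf
  unfold sobNorm
  rw [tsum_congr hterm]
  calc _ ≤ (_ ^ θ * _ ^ (1 - θ)) ^ ((1 : ℝ) / 2) := ENNReal.rpow_le_rpow hsum (by norm_num)
    _ = _ := by
        rw [ENNReal.mul_rpow_of_nonneg _ _ (by norm_num), ← ENNReal.rpow_mul, ← ENNReal.rpow_mul,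
          ← ENNReal.rpow_mul, ← ENNReal.rpow_mul, mul_comm θ, mul_comm (1 - θ)]

lemma sobNorm_rpow_le (a : {k : ℤ × ℤ // k ≠ 0} → ℝ) {β δ : ℝ} (hβ : 2 < β) :
    sobNorm (2 / β - δ) a ^ β ≤ sobNorm (-δ) a ^ (β - 2) * sobNorm (1 - δ) a ^ (2 : ℝ) := by
  have hβ₀ : 0 < β := by linarith
  have hθ₀ : 0 < 1 - 2 / β := by rw [sub_pos, div_lt_one hβ₀]; exact hβ
  have hθ₁ : 1 - 2 / β < 1 := sub_lt_self 1 (by positivity)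
  have hs : 2 / β - δ = (1 - 2 / β) * -δ + (1 - (1 - 2 / β)) * (1 - δ) := by ring
  calc sobNorm (2 / β - δ) a ^ β
      ≤ (sobNorm (-δ) a ^ (1 - 2 / β) * sobNorm (1 - δ) a ^ (1 - (1 - 2 / β))) ^ β := by
        rw [hs]; exact ENNReal.rpow_le_rpow (sobNorm_le_interp a hθ₀ hθ₁) hβ₀.le
    _ = sobNorm (-δ) a ^ (β - 2) * sobNorm (1 - δ) a ^ (2 : ℝ) := by
        rw [ENNReal.mul_rpow_of_nonneg _ _ hβ₀.le, ← ENNReal.rpow_mul, ← ENNReal.rpow_mul]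
        congr 2 <;> field_simp; ring

lemma tendsto_setLIntegral_zero_of_le_rpow_mul {α : Type*} [MeasurableSpace α] {μ : Measure α}
    {s : Set α} (hs : MeasurableSet s) {F G H : ℕ → α → ENNReal} {p : ℝ} (hp : 0 ≤ p)
    (hle : ∀ n, ∀ t ∈ s, H n t ≤ F n t ^ p * G n t)
    (hF : Tendsto (fun n => ⨆ t ∈ s, F n t) atTop (nhds 0))
    (hG : Tendsto (fun n => ∫⁻ t in s, G n t ∂μ) atTop (nhds 0)) :
    Tendsto (fun n => ∫⁻ t in s, H n t ∂μ) atTop (nhds 0) := by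
  have hF_le_one : ∀ᶠ n in atTop, ⨆ t ∈ s, F n t ≤ 1 :=
    (hF.eventually_lt_const zero_lt_one).mono fun _ h => h.le
  refine tendsto_of_tendsto_of_tendsto_of_le_of_le' tendsto_const_nhds hG
    (Eventually.of_forall fun _ => zero_le) (hF_le_one.mono fun n hn => ?_)
  refine setLIntegral_mono_ae' hs (Eventually.of_forall fun t ht => (hle n t ht).trans ?_)
  calc F n t ^ p * G n t ≤ 1 ^ p * G n t :=
        mul_le_mul_left (ENNReal.rpow_le_rpow ((le_biSup _ ht).trans hn) hp) _
    _ = G n t := by rw [ENNReal.one_rpow, one_mul]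

theorem stmt_13_general (T : ℝ)
    (χn : ℕ → ℝ → {k : ℤ × ℤ // k ≠ 0} → ℝ) (χ : ℝ → {k : ℤ × ℤ // k ≠ 0} → ℝ)
    (hconv : ∀ δ : ℝ, δ ∈ Set.Ioc (0:ℝ) 1 →
      Tendsto (fun n : ℕ => ⨆ t ∈ Set.Icc (0:ℝ) T,
          sobNorm (-δ) fun k => χn n t k - χ t k) atTop (nhds 0) ∧
      Tendsto (fun n : ℕ => ∫⁻ t in Set.Icc (0:ℝ) T,
          (sobNorm (1 - δ) fun k => χn n t k - χ t k) ^ (2:ℝ)) atTop (nhds 0))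
    (β γ : ℝ) (hβ : 2 < β) (hγ : γ ∈ Set.Ico (0:ℝ) 1) (hβγ : β * γ < 2) :
    Tendsto (fun n : ℕ => ∫⁻ t in Set.Icc (0:ℝ) T,
        (sobNorm γ fun k => χn n t k - χ t k) ^ β) atTop (nhds 0) := by
  have hβ₀ : 0 < β := by linarith
  obtain ⟨δ, hδ, rfl⟩ : ∃ δ ∈ Set.Ioc (0 : ℝ) 1, γ = 2 / β - δ := by
    refine ⟨2 / β - γ, ⟨?_, ?_⟩, by ring⟩
    · rw [sub_pos, lt_div_iff₀ hβ₀]; linarith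
    · have : 2 / β < 1 := (div_lt_one hβ₀).2 hβ
      linarith [hγ.1]
  obtain ⟨hsup, hint⟩ := hconv δ hδ
  exact tendsto_setLIntegral_zero_of_le_rpow_mul measurableSet_Icc (by linarith)
    (fun n t _ => sobNorm_rpow_le _ hβ) hsup hint

/-- Lemma 3.6 of the paper, on the Fourier side: if `χ_n → χ` in
`L^∞(0,T;H⁻(𝕋²)) ∩ L²(0,T;H^{1−}(𝕋²))` (with uniform bounds), then for every `β > 2` and
`γ ∈ [0,1)` with `βγ < 2`, `χ_n → χ` in `L^β(0,T;H^γ(𝕋²))`. -/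
theorem stmt_13 (T : ℝ) (hT : 0 < T)
    (χn : ℕ → ℝ → {k : ℤ × ℤ // k ≠ 0} → ℝ) (χ : ℝ → {k : ℤ × ℤ // k ≠ 0} → ℝ)
    (hmeasn : ∀ n k, Measurable fun t => χn n t k)
    (hmeas : ∀ k, Measurable fun t => χ t k)
    (hbound : ∀ δ : ℝ, δ ∈ Set.Ioc (0:ℝ) 1 →
      (⨆ t ∈ Set.Icc (0:ℝ) T, sobNorm (-δ) (χ t)) < ⊤ ∧
      (∫⁻ t in Set.Icc (0:ℝ) T, sobNorm (1 - δ) (χ t) ^ (2:ℝ)) < ⊤ ∧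
      ∀ n : ℕ, (⨆ t ∈ Set.Icc (0:ℝ) T, sobNorm (-δ) (χn n t)) < ⊤ ∧
        (∫⁻ t in Set.Icc (0:ℝ) T, sobNorm (1 - δ) (χn n t) ^ (2:ℝ)) < ⊤)
    (hconv : ∀ δ : ℝ, δ ∈ Set.Ioc (0:ℝ) 1 →
      Tendsto (fun n : ℕ => ⨆ t ∈ Set.Icc (0:ℝ) T,
          sobNorm (-δ) fun k => χn n t k - χ t k) atTop (nhds 0) ∧
      Tendsto (fun n : ℕ => ∫⁻ t in Set.Icc (0:ℝ) T,
          (sobNorm (1 - δ) fun k => χn n t k - χ t k) ^ (2:ℝ)) atTop (nhds 0))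
    (β γ : ℝ) (hβ : 2 < β) (hγ : γ ∈ Set.Ico (0:ℝ) 1) (hβγ : β * γ < 2) :
    Tendsto (fun n : ℕ => ∫⁻ t in Set.Icc (0:ℝ) T,
        (sobNorm γ fun k => χn n t k - χ t k) ^ β) atTop (nhds 0) :=
  stmt_13_general T χn χ hconv β γ hβ hγ hβγ
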